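/- Let B be a Boolean subring of a ring R, M a maximal ideal of B, and v ∈ B an idempotent with v ∉ M. Then v ∉ R·M·v, i.e., v cannot be written as a finite sum ∑ rᵢmᵢv with rᵢ ∈ R and mᵢ ∈ M; hence the left ideal R·Mv is a proper R-submodule of Rv. -/
import Mathlib


/-- `B` is a subring (not necessarily unital) of `R`, given as a set. -/
def IsNUSubring {R : Type*} [NonUnitalRing R] (B : Set R) : Prop :=
  (0 : R) ∈ B ∧ (∀ x ∈ B, ∀ y ∈ B, x + y ∈ B) ∧ (∀ x ∈ B, -x ∈ B) ∧
    ∀ x ∈ B, ∀ y ∈ B, x * y ∈ B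

/-- `J` is a (two-sided) ideal of the subring with underlying set `B`. -/
def IsIdealOf {R : Type*} [NonUnitalRing R] (J B : Set R) : Prop :=
  J ⊆ B ∧ (0 : R) ∈ J ∧ (∀ x ∈ J, ∀ y ∈ J, x + y ∈ J) ∧ (∀ x ∈ J, -x ∈ J) ∧
    ∀ b ∈ B, ∀ x ∈ J, b * x ∈ J ∧ x * b ∈ J

/-- The set `Rv = {rv : r ∈ R}`. -/
def Rset {R : Type*} [NonUnitalRing R] (v : R) : Set R := {x : R | ∃ t : R, x = t * v}

lemma bool_add_self {R : Type*} [NonUnitalRing R] (B : Set R) (hsub : IsNUSubring B)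
    (hBool : ∀ b ∈ B, b * b = b) : ∀ a ∈ B, a + a = 0 := by
  intro a ha
  have hsum : a + a ∈ B := hsub.2.1 a ha a ha
  have h := hBool (a + a) hsum
  have ha2 := hBool a ha
  simp only [add_mul, mul_add, ha2] at h
  exact add_eq_left.mp h

lemma bool_comm {R : Type*} [NonUnitalRing R] (B : Set R) (hsub : IsNUSubring B)
    (hBool : ∀ b ∈ B, b * b = b) : ∀ a ∈ B, ∀ b ∈ B, a * b = b * a := by
  intro a ha b hb
  have hsum : a + b ∈ B := hsub.2.1 a ha b hb
  have h := hBool (a + b) hsum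
  rw [add_mul, mul_add, mul_add, hBool a ha, hBool b hb] at h
  rw [add_assoc, ← add_assoc (a * b)] at h
  have h1 : a * b + b * a = 0 := add_eq_right.mp (add_left_cancel h)
  have h2 : b * a + b * a = 0 :=
    bool_add_self B hsub hBool _ (hsub.2.2.2 b hb a ha)
  exact (eq_neg_of_add_eq_zero_left h1).trans (neg_eq_of_add_eq_zero_left h2)

/-- join lemma: for a finite family of elements of M there is `w ∈ M` with `mᵢ w = mᵢ`. -/
lemma join_exists {R : Type*} [NonUnitalRing R] (B : Set R) (hsub : IsNUSubring B)
    (hBool : ∀ b ∈ B, b * b = b) (M : Set R) (hM : IsIdealOf M B) :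
    ∀ (n : ℕ) (m : Fin n → R), (∀ i, m i ∈ M) → ∃ w ∈ M, ∀ i, m i * w = m i := by
  intro n
  induction n with
  | zero => exact fun m _ => ⟨0, hM.2.1, fun i => i.elim0⟩
  | succ n ih =>
    intro m hm
    obtain ⟨w, hwM, hw⟩ := ih (fun i => m i.castSucc) (fun i => hm _)
    have hwB : w ∈ B := hM.1 hwM
    set a := m (Fin.last n) with ha
    have haM : a ∈ M := hm _
    have haB : a ∈ B := hM.1 haM
    have hawM : a * w ∈ M := (hM.2.2.2.2 a haB w hwM).1
    refine ⟨a + w + -(a * w), ?_, ?_⟩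
    · exact hM.2.2.1 _ (hM.2.2.1 a haM w hwM) _ (hM.2.2.2.1 _ hawM)
    · intro i
      induction i using Fin.lastCases with
      | last =>
        have haa := hBool a haB
        have e : a * (a + w + -(a * w)) = a * a + a * w + -(a * a * w) := by
          rw [mul_add, mul_add, mul_neg, mul_assoc]
        rw [e, haa]
        abel
      | cast j =>
        have hjB : m j.castSucc ∈ B := hM.1 (hm _)
        have hjw := hw j
        have key : m j.castSucc * (a * w) = m j.castSucc * a := by
          calc m j.castSucc * (a * w) = a * (m j.castSucc * w) := by
                rw [← mul_assoc, ← mul_assoc, bool_comm B hsub hBool _ hjB a haB]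
            _ = a * m j.castSucc := by rw [hjw]
            _ = m j.castSucc * a := bool_comm B hsub hBool a haB _ hjB
        rw [mul_add, mul_add, mul_neg, key, hjw]
        abel

/-- Let `B` be a Boolean subring of a ring `R`, `M` a maximal ideal of `B`, and
`v ∈ B` with `v ∉ M`. Then `v` is not a finite sum `∑ rᵢ(mᵢv)` with `rᵢ ∈ R`,
`mᵢ ∈ M`; hence the left ideal `R·Mv` is a proper `R`-submodule of `Rv`. -/
theorem not_mem_left_ideal_generated_by_maximal_ideal {R : Type*} [NonUnitalRing R]
    (B : Set R) (hsub : IsNUSubring B) (hBool : ∀ b ∈ B, b * b = b)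
    (M : Set R) (hM : IsIdealOf M B) (hMproper : M ≠ B)
    (hMmax : ∀ J : Set R, IsIdealOf J B → M ⊆ J → J = M ∨ J = B)
    (v : R) (hvB : v ∈ B) (hvM : v ∉ M) :
    (¬ ∃ (n : ℕ) (t m : Fin n → R), (∀ i, m i ∈ M) ∧ v = ∑ i, t i * (m i * v)) ∧
    {x : R | ∃ (n : ℕ) (t m : Fin n → R), (∀ i, m i ∈ M) ∧ x = ∑ i, t i * (m i * v)}
      ⊆ Rset v ∧
    {x : R | ∃ (n : ℕ) (t m : Fin n → R), (∀ i, m i ∈ M) ∧ x = ∑ i, t i * (m i * v)}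
      ≠ Rset v := by
  have hmain : ¬ ∃ (n : ℕ) (t m : Fin n → R), (∀ i, m i ∈ M) ∧ v = ∑ i, t i * (m i * v) := by
    rintro ⟨n, t, m, hmM, hv⟩
    obtain ⟨w, hwM, hw⟩ := join_exists B hsub hBool M hM n m hmM
    have hwB : w ∈ B := hM.1 hwM
    have hvw : v * w ∈ M := (hM.2.2.2.2 v hvB w hwM).1
    have hvwv : v * w = v := by
      calc v * w = (∑ i, t i * (m i * v)) * w := by rw [← hv]
        _ = ∑ i, t i * (m i * v) * w := Finset.sum_mul _ _ _
        _ = ∑ i, t i * (m i * v) := by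
            refine Finset.sum_congr rfl fun i _ => ?_
            have : m i * v * w = m i * v := by
              rw [mul_assoc, bool_comm B hsub hBool v hvB w hwB, ← mul_assoc, hw i]
            rw [mul_assoc, this]
        _ = v := hv.symm
    exact hvM (hvwv ▸ hvw)
  refine ⟨hmain, ?_, ?_⟩
  · rintro x ⟨n, t, m, hmM, hx⟩
    refine ⟨∑ i, t i * m i, ?_⟩
    rw [hx, Finset.sum_mul]
    exact Finset.sum_congr rfl fun i _ => (mul_assoc _ _ _).symm
  · intro h
    have hv : v ∈ Rset v := ⟨v, (hBool v hvB).symm⟩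
    rw [← h] at hv
    exact hmain hv
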